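/- Let G be a countable group, and N₁, N₂ closed G-invariant subsets of Sub(G) such that N₂ admits a unique minimal closed G-invariant subset C. If N₁ ≼ N₂, then N₁ ≼ C. -/

import Mathlib

/-- The Chabauty topology on the space of subgroups of `G`. -/
noncomputable instance chabautyTopology {G : Type*} [Group G] :
    TopologicalSpace (Subgroup G) :=
  TopologicalSpace.induced
    (fun H : Subgroup G => fun g : G => @decide (g ∈ H) (Classical.propDecidable _))
    inferInstance

def ConjInvariant {G : Type*} [Group G] (A : Set (Subgroup G)) : Prop :=
  ∀ (g : G), ∀ H ∈ A, Subgroup.map (MulAut.conj g).toMonoidHom H ∈ A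

/-!
Since `G` is discrete, `H ↦ (g ↦ [g ∈ H])` embeds `Sub(G)` as a closed subset of the compact
space `G → Bool`; so `Sub(G)` is compact and `≤` is a closed relation on it, and the upper
closure of the closed set `N₁` is closed. Hence `N₂ ∩ upperClosure N₁` is a nonempty closed
invariant set; by Zorn and compactness it contains a minimal one, which by uniqueness is `C`.
So every point of `C` lies above some point of `N₁`.
-/

theorem IsClosed.exists_minimal_nonempty_closed_subset_of_sInter {X : Type*}
    [TopologicalSpace X] [CompactSpace X] {P : Set X → Prop}
    (hP : ∀ c : Set (Set X), c.Nonempty → (∀ s ∈ c, P s) → P (⋂₀ c))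
    {S : Set X} (hS : IsClosed S) (hne : S.Nonempty) (hPS : P S) :
    ∃ V ⊆ S, Minimal (fun V => IsClosed V ∧ V.Nonempty ∧ P V) V := by
  refine zorn_superset_nonempty _ (fun c hc hchain hcne => ?_) S ⟨hS, hne, hPS⟩
  have : Nonempty c := hcne.to_subtype
  refine ⟨⋂₀ c, ⟨isClosed_sInter fun s hs => (hc hs).1, ?_,
    hP c hcne fun s hs => (hc hs).2.2⟩, fun s => Set.sInter_subset_of_mem⟩
  exact IsCompact.nonempty_sInter_of_directed_nonempty_isCompact_isClosed
    (hchain.symm.directedOn (r := fun s t : Set X => t ⊆ s))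
    (fun s hs => (hc hs).2.1) (fun s hs => (hc hs).1.isCompact) (fun s hs => (hc hs).1)

theorem IsClosed.upperClosure_of_compactSpace {α : Type*} [TopologicalSpace α] [Preorder α]
    [CompactSpace α] [OrderClosedTopology α] {s : Set α} (hs : IsClosed s) :
    IsClosed (upperClosure s : Set α) := by
  have : (upperClosure s : Set α) =
      Prod.snd '' (s ×ˢ Set.univ ∩ {p : α × α | p.1 ≤ p.2}) := by
    ext x
    simp [mem_upperClosure]
  rw [this]
  exact isClosedMap_snd_of_compactSpace _
    ((hs.prod isClosed_univ).inter OrderClosedTopology.isClosed_le')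

namespace Subgroup

variable {G : Type*} [Group G]

theorem isInducing_boolIndicator :
    Topology.IsInducing fun H : Subgroup G => (H : Set G).boolIndicator :=
  ⟨rfl⟩

theorem injective_boolIndicator :
    Function.Injective fun H : Subgroup G => (H : Set G).boolIndicator :=
  fun H K h => SetLike.coe_injective <| Set.ext fun g => by
    rw [Set.mem_iff_boolIndicator, Set.mem_iff_boolIndicator]
    exact Iff.of_eq (congrArg (· = true) (congrFun h g))

theorem isClopen_setOf_mem (g : G) : IsClopen {H : Subgroup G | g ∈ H} := by
  simp only [SetLike.mem_coe.symm, Set.mem_iff_boolIndicator]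
  exact (isClopen_discrete {true}).preimage
    ((continuous_apply g).comp isInducing_boolIndicator.continuous)

theorem range_boolIndicator :
    Set.range (fun H : Subgroup G => (H : Set G).boolIndicator) =
      {u | u 1 = true ∧ (∀ g h, u g = true → u h = true → u (g * h) = true) ∧
        ∀ g, u g = true → u g⁻¹ = true} := by
  ext u
  constructor
  · rintro ⟨H, rfl⟩
    simp only [Set.mem_ofPred_eq, ← Set.mem_iff_boolIndicator, SetLike.mem_coe]
    exact ⟨H.one_mem, fun g h => H.mul_mem, fun g => H.inv_mem⟩
  · rintro ⟨one_mem, mul_mem, inv_mem⟩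
    let H : Subgroup G :=
      { carrier := {g | u g = true}
        one_mem' := one_mem
        mul_mem' := mul_mem _ _
        inv_mem' := inv_mem _ }
    refine ⟨H, funext fun g => ?_⟩
    rw [Bool.eq_iff_iff, ← Set.mem_iff_boolIndicator]
    rfl

theorem isClosed_range_boolIndicator :
    IsClosed (Set.range fun H : Subgroup G => (H : Set G).boolIndicator) := by
  have hu (g : G) : IsClopen {u : G → Bool | u g = true} :=
    (isClopen_discrete {true}).preimage (continuous_apply g)
  rw [range_boolIndicator]
  simp only [Set.ofPred_and, Set.ofPred_forall]
  exact (hu 1).isClosed.inter <| (isClosed_iInter fun g => isClosed_iInter fun h =>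
    isClosed_imp (hu g).isOpen (isClosed_imp (hu h).isOpen (hu _).isClosed)).inter <|
    isClosed_iInter fun g => isClosed_imp (hu g).isOpen (hu _).isClosed

instance : CompactSpace (Subgroup G) :=
  Topology.IsClosedEmbedding.compactSpace
    ⟨⟨isInducing_boolIndicator, injective_boolIndicator⟩, isClosed_range_boolIndicator⟩

instance : OrderClosedTopology (Subgroup G) where
  isClosed_le' := by
    simp only [SetLike.le_def, Set.ofPred_forall]
    exact isClosed_iInter fun g => isClosed_imp
      ((isClopen_setOf_mem g).isOpen.preimage continuous_fst)
      ((isClopen_setOf_mem g).isClosed.preimage continuous_snd)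

end Subgroup

namespace ConjInvariant

variable {G : Type*} [Group G] {A B : Set (Subgroup G)}

theorem inter (hA : ConjInvariant A) (hB : ConjInvariant B) : ConjInvariant (A ∩ B) :=
  fun g H hH => ⟨hA g H hH.1, hB g H hH.2⟩

theorem sInter {c : Set (Set (Subgroup G))} (hc : ∀ A ∈ c, ConjInvariant A) :
    ConjInvariant (⋂₀ c) :=
  fun g H hH A hA => hc A hA g H (hH A hA)

theorem upperClosure (hA : ConjInvariant A) :
    ConjInvariant (upperClosure A : Set (Subgroup G)) := by
  rintro g K ⟨H, hH, hHK⟩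
  exact ⟨_, hA g H hH, Subgroup.map_mono hHK⟩

end ConjInvariant

theorem prec_unique_minimal_general {G : Type*} [Group G]
    (N₁ N₂ C : Set (Subgroup G))
    (hN₁c : IsClosed N₁) (hN₁inv : ConjInvariant N₁)
    (hN₂c : IsClosed N₂) (hN₂inv : ConjInvariant N₂)
    (hCne : C.Nonempty)
    (hCuniq : ∀ D : Set (Subgroup G), D ⊆ N₂ → IsClosed D → D.Nonempty → ConjInvariant D →
      (∀ E : Set (Subgroup G), E ⊆ D → IsClosed E → E.Nonempty → ConjInvariant E → E = D) →
      D = C)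
    (hprec : ∃ H ∈ N₁, ∃ K ∈ N₂, H ≤ K) :
    ∃ H ∈ N₁, ∃ K ∈ C, H ≤ K := by
  obtain ⟨H₀, hH₀, K₀, hK₀, hle₀⟩ := hprec
  have hS : IsClosed (N₂ ∩ upperClosure N₁) :=
    hN₂c.inter hN₁c.upperClosure_of_compactSpace
  obtain ⟨M, hMS, hM⟩ := hS.exists_minimal_nonempty_closed_subset_of_sInter
    (fun _ _ => ConjInvariant.sInter) ⟨K₀, hK₀, H₀, hH₀, hle₀⟩
    (hN₂inv.inter hN₁inv.upperClosure)
  have hMC : M = C :=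
    hCuniq M (hMS.trans Set.inter_subset_left) hM.1.1 hM.1.2.1 hM.1.2.2
      fun E hEM hEc hEne hEinv => hM.eq_of_subset ⟨hEc, hEne, hEinv⟩ hEM
  obtain ⟨K, hK⟩ := hCne
  obtain ⟨-, H, hH, hHK⟩ := hMS (hMC ▸ hK)
  exact ⟨H, hH, K, hK, hHK⟩

/-- If `N₁, N₂` are closed conjugation-invariant subsets of `Sub(G)`, `N₂` admits a
unique minimal closed invariant subset `C`, and `N₁ ≼ N₂`, then `N₁ ≼ C`. -/
theorem prec_unique_minimal {G : Type*} [Group G] [Countable G]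
    (N₁ N₂ C : Set (Subgroup G))
    (hN₁c : IsClosed N₁) (hN₁inv : ConjInvariant N₁)
    (hN₂c : IsClosed N₂) (hN₂inv : ConjInvariant N₂)
    (hCsub : C ⊆ N₂) (hCc : IsClosed C) (hCne : C.Nonempty) (hCinv : ConjInvariant C)
    (hCmin : ∀ D : Set (Subgroup G), D ⊆ C → IsClosed D → D.Nonempty → ConjInvariant D →
      D = C)
    (hCuniq : ∀ D : Set (Subgroup G), D ⊆ N₂ → IsClosed D → D.Nonempty → ConjInvariant D →
      (∀ E : Set (Subgroup G), E ⊆ D → IsClosed E → E.Nonempty → ConjInvariant E → E = D) →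
      D = C)
    (hprec : ∃ H ∈ N₁, ∃ K ∈ N₂, H ≤ K) :
    ∃ H ∈ N₁, ∃ K ∈ C, H ≤ K :=
  prec_unique_minimal_general N₁ N₂ C hN₁c hN₁inv hN₂c hN₂inv hCne hCuniq hprec
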